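/- arXiv:1411.6552 — 2 statements merged into one kernel-verified Lean document; each statement's English description precedes it below -/
import Mathlib

section
/- Let s, t be coprime positive integers, p, q ∈ ℂ with p ≠ 0 and q ≠ 0, and f(z) = z^{s+t} + p z^t + q. Suppose a ∈ ℂ is a double root of f, i.e., f(a) = 0 and f′(a) = 0. Then: (i) |a|^{s+t} = |q|·t/s and |a|^s = |p|·t/(s+t); (ii) |p| = |q|^{s/(s+t)}·((t/s)^{s/(s+t)} + (s/t)^{t/(s+t)}); and (iii) exactly t−1 roots of f, counted with multiplicity, have norm strictly smaller than |a| (so that in the ordering of the roots by nondecreasing norm, the double root occupies positions t and t+1). -/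
/-!
Eliminating `p` and `q` with `f a = f' a = 0` gives `p = -((s+t)/t) a^s` and
`q = (s/t) a^(s+t)`, from which (i) and (ii) are computations. It also gives
`f (a w) = a^(s+t) G(w)` with `G_c(w) = w^(s+t) - ((s+t)/t) w^t + c` at `c = s/t`, so (iii) asks
how many roots of `G_(s/t)` lie in the open unit disc.

The roots of `G_c` depend continuously on `c`. For `c = 0` exactly `t` of them lie in the disc
(`0`, with multiplicity `t`; the others have modulus `((s+t)/t)^(1/s) > 1`). For `0 ≤ c < s/t`
no root lies on the unit circle, so this count stays `t`. At `c = s/t` the only root on the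
circle is the double root `1` (coprimality of `s` and `t` enters here), and for `c` slightly
below `s/t` it splits into two real roots on either side of `1`, since
`x^(s+t) - ((s+t)/t) x^t + s/t > 0` for real `x ≥ 0`, `x ≠ 1` (Bernoulli's inequality). Hence
`t - 1` roots of `G_(s/t)` lie in the open disc.
-/

open Polynomial Filter Topology Set

theorem Multiset.exists_eq_map_univ_val {α : Type*} {m : Multiset α} {n : ℕ}
    (h : Multiset.card m = n) : ∃ v : Fin n → α, m = Finset.univ.val.map v := by
  induction m using Quotient.inductionOn with | h l => ?_
  rw [Multiset.quot_mk_to_coe, Multiset.coe_card] at h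
  subst h
  exact ⟨l.get, by rw [Fin.univ_val_map, List.ofFn_get]; rfl⟩

theorem Multiset.exists_pos_forall_le {α : Type*} {m : Multiset α} {f : α → ℝ}
    (hf : ∀ a ∈ m, 0 < f a) : ∃ δ > 0, ∀ a ∈ m, δ ≤ f a := by
  classical
  have hle : ∀ᶠ δ in 𝓝[>] (0 : ℝ), ∀ a ∈ m.toFinset, δ ≤ f a :=
    (eventually_all_finset _).2 fun a ha => nhdsWithin_le_nhds <|
      (eventually_lt_nhds (hf a (Multiset.mem_toFinset.mp ha))).mono fun _ h => h.le
  obtain ⟨δ, hδ, hδ0⟩ := (hle.and self_mem_nhdsWithin).exists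
  exact ⟨δ, hδ0, fun a ha => hδ a (Multiset.mem_toFinset.mpr ha)⟩

theorem Multiset.Rel.card_filter_eq {α β : Type*} {P : α → Prop} {Q : β → Prop}
    [DecidablePred P] [DecidablePred Q] {m₁ : Multiset α} {m₂ : Multiset β}
    (h : Multiset.Rel (fun a b => P a ↔ Q b) m₁ m₂) :
    Multiset.card (m₁.filter P) = Multiset.card (m₂.filter Q) := by
  induction h with
  | zero => rfl
  | @cons _ b _ _ hab _ ih => by_cases hb : Q b <;> simp [hab, hb, ih]

theorem Multiset.card_filter_norm_lt_eq_of_rel {E : Type*} [SeminormedAddCommGroup E]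
    {m₁ m₂ : Multiset E} {δ r : ℝ} (h : Multiset.Rel (fun x y => dist x y < δ) m₁ m₂)
    (hmargin : ∀ y ∈ m₂, δ ≤ |‖y‖ - r|) :
    Multiset.card (m₁.filter (‖·‖ < r)) = Multiset.card (m₂.filter (‖·‖ < r)) := by
  refine (h.mono fun x _ y hy hxy => ?_).card_filter_eq
  have hxy' := (abs_norm_sub_norm_le x y).trans_lt (dist_eq_norm x y ▸ hxy)
  have := hmargin y hy
  constructor <;> intro <;> cases abs_cases (‖y‖ - r) <;> cases abs_cases (‖x‖ - ‖y‖) <;> linarith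

theorem Multiset.card_filter_eq_one_of_card_eq_two {α : Type*} {P : α → Prop} [DecidablePred P]
    {m : Multiset α} (hm : Multiset.card m = 2) {u v : α} (hu : u ∈ m) (hv : v ∈ m) (hPu : P u)
    (hPv : ¬ P v) : Multiset.card (m.filter P) = 1 := by
  have h1 : 1 ≤ Multiset.card (m.filter P) :=
    Multiset.card_pos_iff_exists_mem.mpr ⟨u, Multiset.mem_filter.mpr ⟨hu, hPu⟩⟩
  have h2 : 1 ≤ Multiset.card (m.filter fun a => ¬ P a) :=
    Multiset.card_pos_iff_exists_mem.mpr ⟨v, Multiset.mem_filter.mpr ⟨hv, hPv⟩⟩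
  have := congrArg Multiset.card (m.filter_add_not P)
  rw [Multiset.card_add, hm] at this
  omega

theorem Multiset.card_filter_norm_lt_one_of_rel_of_double_one {m₁ m₂ : Multiset ℂ} {ε : ℝ}
    (hrel : Multiset.Rel (fun x y => dist x y < ε) m₁ m₂) (hcount : m₂.count 1 = 2)
    (hmargin : ∀ y ∈ m₂, y ≠ 1 → 2 * ε ≤ |‖y‖ - 1|) {u v : ℂ} (hu : u ∈ m₁) (hv : v ∈ m₁)
    (hu1 : dist u 1 < ε) (hv1 : dist v 1 < ε) (hun : ‖u‖ < 1) (hvn : 1 ≤ ‖v‖) :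
    Multiset.card (m₁.filter (‖·‖ < 1)) = Multiset.card (m₂.filter (‖·‖ < 1)) + 1 := by
  classical
  have hsplit := m₂.filter_add_not (· = 1)
  rw [Multiset.filter_eq', hcount] at hsplit
  rw [← hsplit, Multiset.rel_add_right] at hrel
  obtain ⟨A, B, hA, hB, rfl⟩ := hrel
  obtain ⟨hAcard, hAnear⟩ := Multiset.rel_replicate_right.mp hA
  have hBfar : ∀ x ∈ B, ε ≤ dist x 1 := by
    intro x hx
    obtain ⟨y, hy, hxy⟩ := Multiset.exists_mem_of_rel_of_mem hB hx
    rw [Multiset.mem_filter] at hy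
    have : 2 * ε ≤ dist y 1 := (hmargin y hy.1 hy.2).trans <| by
      rw [dist_eq_norm]; simpa using abs_norm_sub_norm_le y 1
    linarith [dist_triangle_left y 1 x, dist_comm x y]
  have hmemA {w : ℂ} (hw : w ∈ A + B) (hw1 : dist w 1 < ε) : w ∈ A :=
    (Multiset.mem_add.mp hw).resolve_right fun h => (hBfar w h).not_gt hw1
  have hAin : Multiset.card (A.filter (‖·‖ < 1)) = 1 :=
    Multiset.card_filter_eq_one_of_card_eq_two hAcard (hmemA hu hu1) (hmemA hv hv1) hun hvn.not_gt
  have hBin : Multiset.card (B.filter (‖·‖ < 1)) =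
      Multiset.card ((m₂.filter fun z => ¬ z = 1).filter (‖·‖ < 1)) := by
    refine Multiset.card_filter_norm_lt_eq_of_rel hB fun y hy => ?_
    rw [Multiset.mem_filter] at hy
    linarith [hmargin y hy.1 hy.2, dist_nonneg.trans_lt hu1]
  conv_rhs => rw [← hsplit]
  have hrep : (Multiset.replicate 2 (1 : ℂ)).filter (‖·‖ < 1) = 0 := by simp
  rw [Multiset.filter_add, Multiset.filter_add, Multiset.card_add, Multiset.card_add, hAin, hBin,
    hrep, Multiset.card_zero, zero_add, add_comm]

theorem Multiset.card_filter_norm_lt_map_mul {m : Multiset ℂ} {a : ℂ} (ha : a ≠ 0) :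
    Multiset.card ((m.map (a * ·)).filter (‖·‖ < ‖a‖)) = Multiset.card (m.filter (‖·‖ < 1)) := by
  rw [Multiset.filter_map, Multiset.card_map]
  congr 2
  ext w
  simp [norm_pos_iff.mpr ha]

theorem Complex.eq_one_of_norm_sub_eq {r : ℝ} {u : ℂ} (hu : ‖u‖ = 1) (h : ‖(r : ℂ) - u‖ = r - 1) :
    u = 1 := by
  have hr : 1 ≤ r := by linarith [norm_nonneg ((r : ℂ) - u)]
  have hu2 : u.re * u.re + u.im * u.im = 1 := by
    rw [← Complex.normSq_apply, ← Complex.sq_norm, hu, one_pow]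
  have hru : (r - u.re) * (r - u.re) + u.im * u.im = (r - 1) ^ 2 := by
    rw [← h, Complex.sq_norm, Complex.normSq_apply]; simp
  have hre : u.re = 1 := by nlinarith
  have him : u.im = 0 := by nlinarith
  exact Complex.ext hre him

theorem Polynomial.roots_eq_map_of_eval_eq_prod {R : Type*} [CommRing R] [IsDomain R]
    [Infinite R] {n : ℕ} {P : R[X]} {ρ : Fin n → R} (h : ∀ z, P.eval z = ∏ j, (z - ρ j)) :
    P.roots = Finset.univ.val.map ρ := by
  have : P = ((Finset.univ.val.map ρ).map (X - C ·)).prod := by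
    refine Polynomial.funext fun z => ?_
    rw [h, eval_multiset_prod, Multiset.map_map, Multiset.map_map]
    simp [Finset.prod_eq_multiset_prod]
  rw [this, roots_multiset_prod_X_sub_C]

theorem Polynomial.eventually_rel_roots_of_tendsto_eval {ι : Type*} {l : Filter ι}
    {P : ι → ℂ[X]} {P₀ : ℂ[X]} {n : ℕ} (hmonic : ∀ i, (P i).Monic)
    (hdeg : ∀ i, (P i).natDegree = n) {R : ℝ} (hbound : ∀ᶠ i in l, ∀ z ∈ (P i).roots, ‖z‖ ≤ R)
    (hlim : ∀ z, Tendsto (fun i => (P i).eval z) l (𝓝 (P₀.eval z))) {ε : ℝ} (hε : 0 < ε) :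
    ∀ᶠ i in l, Multiset.Rel (fun x y => dist x y < ε) (P i).roots P₀.roots := by
  -- Along the indices where the claim fails, the enumerated roots of `P i` have a cluster
  -- point `ρ` by compactness; `ρ` enumerates the roots of `P₀`, which is absurd.
  by_contra hbad
  set bad := {i | ¬ Multiset.Rel (fun x y => dist x y < ε) (P i).roots P₀.roots}
  have : NeBot (l ⊓ 𝓟 bad) := by
    rw [← frequently_iff_neBot]; exact not_eventually.mp hbad
  have hv (i : ι) : ∃ v : Fin n → ℂ, (P i).roots = Finset.univ.val.map v :=
    Multiset.exists_eq_map_univ_val (by rw [IsAlgClosed.card_roots_eq_natDegree, hdeg])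
  choose v hv using hv
  set prodAt : ℂ → (Fin n → ℂ) → ℂ := fun z w => ∏ j, (z - w j)
  have heval (z : ℂ) : (fun i => (P i).eval z) = prodAt z ∘ v := by
    ext i
    rw [(IsAlgClosed.splits _).eval_eq_prod_roots_of_monic (hmonic i), hv, Multiset.map_map]
    rfl
  have hK : IsCompact (Set.univ.pi fun _ : Fin n => Metric.closedBall (0 : ℂ) R) :=
    isCompact_univ_pi fun _ => isCompact_closedBall _ _
  obtain ⟨ρ, -, hρ⟩ := hK.exists_mapClusterPt (f := l ⊓ 𝓟 bad) (u := v) <| by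
    rw [le_principal_iff, mem_map]
    filter_upwards [inf_le_left (a := l) (b := 𝓟 bad) hbound] with i hi j _
    exact mem_closedBall_zero_iff.mpr <| hi _ <| by
      rw [hv]; exact Multiset.mem_map_of_mem _ (Finset.mem_univ_val _)
  have hroots : P₀.roots = Finset.univ.val.map ρ := by
    refine Polynomial.roots_eq_map_of_eval_eq_prod fun z => ?_
    have hcl : MapClusterPt (prodAt z ρ) (l ⊓ 𝓟 bad) (prodAt z ∘ v) :=
      hρ.continuousAt_comp (continuous_finsetProd _ fun j _ => by fun_prop).continuousAt
    have hlim' : Tendsto (prodAt z ∘ v) (l ⊓ 𝓟 bad) (𝓝 (P₀.eval z)) :=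
      heval z ▸ (hlim z).mono_left inf_le_left
    exact (eq_of_nhds_neBot (hcl.clusterPt.mono hlim').neBot).symm
  have hnear : ∀ᶠ w in 𝓝 ρ, ∀ j, dist (w j) (ρ j) < ε :=
    eventually_all.mpr fun j =>
      (continuous_apply j).continuousAt.eventually (Metric.ball_mem_nhds (ρ j) hε)
  obtain ⟨i, hi, hbad_i⟩ :=
    ((hρ.frequently hnear).and_eventually (inf_le_right (a := l) (mem_principal_self bad))).exists
  apply hbad_i
  rw [hv, hroots, Multiset.rel_map]
  exact Multiset.rel_refl_of_refl_on fun j _ => hi j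

theorem add_div_mul_pow_eq_rpow_mul {s t : ℕ} (hs : 0 < s) (ht : 0 < t) {A : ℝ} (hA : 0 ≤ A) :
    ((s : ℝ) + t) / t * A ^ s = ((s : ℝ) / t * A ^ (s + t)) ^ ((s : ℝ) / (s + t)) *
      (((t : ℝ) / s) ^ ((s : ℝ) / (s + t)) + ((s : ℝ) / t) ^ ((t : ℝ) / (s + t))) := by
  have hpow : (A ^ (s + t)) ^ ((s : ℝ) / (s + t)) = A ^ s := by
    rw [← Real.rpow_natCast, ← Real.rpow_mul hA, Nat.cast_add, mul_div_cancel₀ _ (by positivity),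
      Real.rpow_natCast]
  have hinv : ((s : ℝ) / t) ^ ((s : ℝ) / (s + t)) * ((t : ℝ) / s) ^ ((s : ℝ) / (s + t)) = 1 := by
    rw [← Real.mul_rpow (by positivity) (by positivity), div_mul_div_cancel₀', div_self,
      Real.one_rpow] <;> positivity
  have hsum :
      ((s : ℝ) / t) ^ ((s : ℝ) / (s + t)) * ((s : ℝ) / t) ^ ((t : ℝ) / (s + t)) = s / t := by
    rw [← Real.rpow_add (by positivity), ← add_div, div_self (by positivity), Real.rpow_one]
  rw [Real.mul_rpow (by positivity) (by positivity), hpow, mul_add, mul_right_comm, hinv,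
    mul_right_comm, hsum]
  field_simp
  ring

theorem trinomial_coeffs_of_double_root {s t : ℕ} (ht : 0 < t) {p q a : ℂ} (hq : q ≠ 0)
    (ha : (X ^ (s + t) + C p * X ^ t + C q : ℂ[X]).eval a = 0)
    (ha' : (derivative (X ^ (s + t) + C p * X ^ t + C q : ℂ[X])).eval a = 0) :
    a ≠ 0 ∧ p = -(((s : ℂ) + t) / t) * a ^ s ∧ q = (s : ℂ) / t * a ^ (s + t) := by
  have htC : (t : ℂ) ≠ 0 := Nat.cast_ne_zero.mpr ht.ne'
  simp only [eval_add, eval_mul, eval_pow, eval_X, eval_C] at ha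
  have ha0 : a ≠ 0 := by
    rintro rfl
    simp [zero_pow (by omega : s + t ≠ 0), zero_pow ht.ne', hq] at ha
  simp only [derivative_add, derivative_X_pow, derivative_C_mul_X_pow, derivative_C, eval_add,
    eval_mul, eval_pow, eval_X, eval_C, add_zero] at ha'
  have hs1 : a ^ (s + t - 1) * a = a ^ s * a ^ t := by rw [← pow_succ, ← pow_add]; congr 1; omega
  have ht1 : a ^ (t - 1) * a = a ^ t := by rw [← pow_succ]; congr 1; omega
  have hb : ((s : ℂ) + t) / t = 1 + s / t := by field_simp; ring
  push_cast at ha'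
  have hpt : (t * p) * a ^ t = (-((s : ℂ) + t) * a ^ s) * a ^ t := by
    linear_combination a * ha' - ((s : ℂ) + t) * hs1 - p * t * ht1
  have hp : p = -(((s : ℂ) + t) / t) * a ^ s := by
    field_simp
    linear_combination mul_right_cancel₀ (pow_ne_zero t ha0) hpt
  refine ⟨ha0, hp, ?_⟩
  linear_combination ha - a ^ t * hp - (1 + (s : ℂ) / t) * pow_add a s t + a ^ s * a ^ t * hb

noncomputable def normalizedTrinomial (s t : ℕ) (c : ℝ) : ℂ[X] :=
  X ^ (s + t) - C (((s : ℂ) + t) / t) * X ^ t + C (c : ℂ)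

noncomputable def discRootCount (P : ℂ[X]) : ℕ :=
  Multiset.card (P.roots.filter (‖·‖ < 1))

namespace normalizedTrinomial

variable {s t : ℕ}

local notation "G" => normalizedTrinomial s t

theorem eval_eq (c : ℝ) (z : ℂ) :
    (G c).eval z = z ^ (s + t) - ((s : ℂ) + t) / t * z ^ t + c := by
  simp [normalizedTrinomial]

theorem eval_ofReal (c x : ℝ) :
    (G c).eval (x : ℂ) = ((x ^ (s + t) - ((s : ℝ) + t) / t * x ^ t + c : ℝ) : ℂ) := by
  rw [eval_eq]; push_cast; rfl

theorem natDegree_eq (hs : 0 < s) (c : ℝ) : (G c).natDegree = s + t := by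
  unfold normalizedTrinomial
  compute_degree!
  simp [hs.ne']

theorem monic (hs : 0 < s) (c : ℝ) : (G c).Monic := by
  unfold normalizedTrinomial
  monicity!
  simp [hs.ne']

theorem ne_zero (hs : 0 < s) (c : ℝ) : G c ≠ 0 := (monic hs c).ne_zero

theorem norm_coeff : ‖((s : ℂ) + t) / t‖ = ((s : ℝ) + t) / t := by
  rw [norm_div, ← Nat.cast_add, Complex.norm_natCast, Complex.norm_natCast]; push_cast; rfl

theorem one_lt_coeff (hs : 0 < s) (ht : 0 < t) : 1 < ((s : ℝ) + t) / t := by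
  rw [one_lt_div (by positivity)]; exact_mod_cast Nat.lt_add_of_pos_left hs

theorem norm_le_of_mem_roots (hs : 0 < s) {c : ℝ} {z : ℂ} (hz : z ∈ (G c).roots) :
    ‖z‖ ≤ 1 + ((s : ℝ) + t) / t + |c| := by
  rw [mem_roots (ne_zero hs c), IsRoot.def, eval_eq] at hz
  by_cases hz1 : ‖z‖ ≤ 1
  · have : 0 ≤ ((s : ℝ) + t) / t := by positivity
    linarith [abs_nonneg c]
  rw [not_le] at hz1
  have hzt : 1 ≤ ‖z‖ ^ t := one_le_pow₀ hz1.le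
  have hbound : ‖z‖ ^ s * ‖z‖ ^ t ≤ (((s : ℝ) + t) / t + |c|) * ‖z‖ ^ t := by
    calc ‖z‖ ^ s * ‖z‖ ^ t = ‖((s : ℂ) + t) / t * z ^ t - c‖ := by
          rw [← pow_add, ← norm_pow]; congr 1; linear_combination hz
      _ ≤ ((s : ℝ) + t) / t * ‖z‖ ^ t + |c| := by
          refine (norm_sub_le _ _).trans ?_
          rw [norm_mul, norm_pow, norm_coeff, Complex.norm_real, Real.norm_eq_abs]
      _ ≤ _ := by nlinarith [abs_nonneg c]
  have hzs := le_of_mul_le_mul_right hbound (by positivity)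
  linarith [le_self_pow₀ hz1.le hs.ne']

theorem tendsto_eval (c₀ : ℝ) (z : ℂ) :
    Tendsto (fun c => (G c).eval z) (𝓝 c₀) (𝓝 ((G c₀).eval z)) := by
  simp only [eval_eq]
  exact Continuous.tendsto (by fun_prop) c₀

theorem norm_coeff_sub_pow_eq {z : ℂ} (hz : ‖z‖ = 1) {c : ℝ} (h : (G c).IsRoot z) :
    ‖((s : ℂ) + t) / t - z ^ s‖ = |c| := by
  rw [IsRoot.def, eval_eq] at h
  have hc := congrArg norm (show (c : ℂ) = z ^ t * (((s : ℂ) + t) / t - z ^ s) by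
    linear_combination h - pow_add z s t)
  rwa [Complex.norm_real, Real.norm_eq_abs, norm_mul, norm_pow, hz, one_pow, one_mul,
    eq_comm] at hc

theorem not_isRoot_of_norm_eq_one (ht : 0 < t) {c : ℝ} (hc0 : 0 ≤ c)
    (hc : c < (s : ℝ) / t) {z : ℂ} (hz : ‖z‖ = 1) : ¬ (G c).IsRoot z := by
  intro h
  have := norm_sub_norm_le (((s : ℂ) + t) / t) (z ^ s)
  rw [norm_coeff_sub_pow_eq hz h, norm_coeff, norm_pow, hz, one_pow, abs_of_nonneg hc0] at this
  have : ((s : ℝ) + t) / t - 1 = s / t := by field_simp; ring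
  linarith

theorem eq_one_of_isRoot_of_norm_eq_one (hs : 0 < s) (ht : 0 < t) (hst : s.Coprime t) {z : ℂ}
    (hz : ‖z‖ = 1) (h : (G ((s : ℝ) / t)).IsRoot z) : z = 1 := by
  have htC : (t : ℂ) ≠ 0 := Nat.cast_ne_zero.mpr ht.ne'
  have hb : ((s : ℂ) + t) / t = 1 + s / t := by field_simp; ring
  have hzs : z ^ s = 1 := by
    refine Complex.eq_one_of_norm_sub_eq (r := ((s : ℝ) + t) / t) (by rw [norm_pow, hz, one_pow]) ?_
    rw [show (((((s : ℝ) + t) / t : ℝ)) : ℂ) = ((s : ℂ) + t) / t by push_cast; rfl,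
      norm_coeff_sub_pow_eq hz h, abs_of_nonneg (by positivity)]
    field_simp; ring
  have hzt : z ^ t = 1 := by
    rw [IsRoot.def, eval_eq, pow_add, hzs] at h
    have hst0 : (s : ℂ) / t ≠ 0 := div_ne_zero (Nat.cast_ne_zero.mpr hs.ne') htC
    have : (s : ℂ) / t * (z ^ t - 1) = 0 := by push_cast at h; linear_combination -h - z ^ t * hb
    exact sub_eq_zero.mp ((mul_eq_zero.mp this).resolve_left hst0)
  exact (pow_eq_one_iff_of_coprime hst).mp ⟨hzs, hzt⟩

theorem rootMultiplicity_one_critical (hs : 0 < s) (ht : 0 < t) :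
    (G ((s : ℝ) / t)).rootMultiplicity 1 = 2 := by
  have htC : (t : ℂ) ≠ 0 := Nat.cast_ne_zero.mpr ht.ne'
  have hmult (n : ℕ) := lt_rootMultiplicity_iff_isRoot_iterate_derivative (n := n) (t := 1)
    (ne_zero (t := t) hs ((s : ℝ) / t))
  have hroot : ∀ m ≤ 1, (derivative^[m] (G ((s : ℝ) / t))).IsRoot 1 := by
    intro m hm
    interval_cases m <;> simp [normalizedTrinomial, derivative_X_pow] <;> field_simp <;> ring
  have hnot : ¬ (derivative^[2] (G ((s : ℝ) / t))).IsRoot 1 := by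
    intro h
    simp [normalizedTrinomial, derivative_X_pow, Nat.cast_sub (by omega : 1 ≤ s + t),
      Nat.cast_sub ht] at h
    have : ((s + t) * s : ℕ) = (0 : ℂ) := by push_cast; rw [← h]; field_simp; ring
    exact mul_ne_zero (by omega) hs.ne' (Nat.cast_eq_zero.mp this)
  exact le_antisymm (not_lt.mp fun h => hnot ((hmult 2).mp h 2 le_rfl)) ((hmult 1).mpr hroot)

theorem discRootCount_zero (hs : 0 < s) (ht : 0 < t) : discRootCount (G 0) = t := by
  have hfac : G 0 = X ^ t * (X ^ s - C (((s : ℂ) + t) / t)) := by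
    simp only [normalizedTrinomial, Complex.ofReal_zero, C_0, add_zero]; ring
  have hne : X ^ s - C (((s : ℂ) + t) / t) ≠ 0 := X_pow_sub_C_ne_zero hs _
  have houter : ∀ z ∈ (X ^ s - C (((s : ℂ) + t) / t)).roots, ¬ ‖z‖ < 1 := by
    intro z hz hz1
    rw [mem_roots hne, IsRoot.def, eval_sub, eval_pow, eval_X, eval_C, sub_eq_zero] at hz
    have := pow_lt_one₀ (norm_nonneg z) hz1 hs.ne'
    rw [← norm_pow, hz, norm_coeff] at this
    exact this.not_gt (one_lt_coeff hs ht)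
  rw [discRootCount, hfac, roots_mul (mul_ne_zero (pow_ne_zero _ X_ne_zero) hne), roots_X_pow,
    Multiset.filter_add, Multiset.filter_eq_nil.mpr houter, add_zero,
    Multiset.filter_eq_self.mpr (by simp), Multiset.card_nsmul, Multiset.card_singleton, mul_one]

theorem critical_real_pos (hs : 0 < s) (ht : 0 < t) {x : ℝ} (hx : 0 ≤ x) (hx1 : x ≠ 1) :
    0 < x ^ (s + t) - ((s : ℝ) + t) / t * x ^ t + s / t := by
  have hxt : x ^ t - 1 ≠ 0 :=
    sub_ne_zero.mpr fun h => hx1 ((pow_eq_one_iff_of_nonneg hx ht.ne').mp h)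
  have hbernoulli := one_add_mul_self_lt_rpow_one_add (by linarith [pow_nonneg hx t]) hxt
    (one_lt_coeff hs ht)
  have hexp : (t : ℝ) * (((s : ℝ) + t) / t) = ((s + t : ℕ) : ℝ) := by push_cast; field_simp
  rw [add_sub_cancel, ← Real.rpow_natCast, ← Real.rpow_mul hx, hexp] at hbernoulli
  simp only [Real.rpow_natCast] at hbernoulli
  have : ((s : ℝ) + t) / t * (x ^ t - 1) = ((s : ℝ) + t) / t * x ^ t - s / t - 1 := by
    field_simp; ring
  linarith

theorem exists_roots_straddling_one (hs : 0 < s) (ht : 0 < t) {ε : ℝ} (hε : 0 < ε)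
    (hε1 : ε ≤ 1) : ∀ᶠ c in 𝓝[<] ((s : ℝ) / t), ∃ u ∈ (G c).roots, ∃ v ∈ (G c).roots,
      dist u 1 < ε ∧ dist v 1 < ε ∧ ‖u‖ < 1 ∧ 1 ≤ ‖v‖ := by
  set φ : ℝ → ℝ := fun x => x ^ (s + t) - ((s : ℝ) + t) / t * x ^ t + s / t
  have hφ1 : φ 1 = 0 := by simp only [φ]; field_simp; ring
  have hφm : 0 < φ (1 - ε) := critical_real_pos hs ht (by linarith) (by intro h; linarith)
  have hφp : 0 < φ (1 + ε) := critical_real_pos hs ht (by linarith) (by intro h; linarith)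
  filter_upwards [Ioo_mem_nhdsLT (sub_lt_self _ (lt_min hφm hφp))] with c hc
  set ψ : ℝ → ℝ := fun x => φ x + (c - s / t)
  have hψ1 : ψ 1 < 0 := by simp only [ψ, hφ1]; linarith [hc.2]
  have hψm : 0 < ψ (1 - ε) := by
    simp only [ψ]; linarith [hc.1, min_le_left (φ (1 - ε)) (φ (1 + ε))]
  have hψp : 0 < ψ (1 + ε) := by
    simp only [ψ]; linarith [hc.1, min_le_right (φ (1 - ε)) (φ (1 + ε))]
  obtain ⟨xm, hxm, hψxm⟩ :=
    intermediate_value_Ioo' (by linarith) (by fun_prop : Continuous ψ).continuousOn ⟨hψ1, hψm⟩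
  obtain ⟨xp, hxp, hψxp⟩ :=
    intermediate_value_Ioo (by linarith) (by fun_prop : Continuous ψ).continuousOn ⟨hψ1, hψp⟩
  have hroot {x : ℝ} (hx : ψ x = 0) : (x : ℂ) ∈ (G c).roots := by
    rw [mem_roots (ne_zero hs c), IsRoot.def, eval_ofReal, Complex.ofReal_eq_zero, ← hx]
    simp only [ψ, φ]; ring
  have hdist {x : ℝ} (hx : x ∈ Ioo (1 - ε) (1 + ε)) : dist (x : ℂ) 1 < ε := by
    rw [← Complex.ofReal_one, Complex.isometry_ofReal.dist_eq, Real.dist_eq, abs_sub_lt_iff]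
    constructor <;> linarith [hx.1, hx.2]
  refine ⟨xm, hroot hψxm, xp, hroot hψxp, hdist ⟨hxm.1, by linarith [hxm.2]⟩,
    hdist ⟨by linarith [hxp.1], hxp.2⟩, ?_, ?_⟩
  · rw [Complex.norm_real, Real.norm_of_nonneg (by linarith [hxm.1])]; exact hxm.2
  · rw [Complex.norm_real, Real.norm_of_nonneg (by linarith [hxp.1])]; exact hxp.1.le

theorem eventually_rel_roots (hs : 0 < s) (c₀ : ℝ) {ε : ℝ} (hε : 0 < ε) :
    ∀ᶠ c in 𝓝 c₀, Multiset.Rel (fun x y => dist x y < ε) (G c).roots (G c₀).roots := by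
  refine eventually_rel_roots_of_tendsto_eval (R := 2 + ((s : ℝ) + t) / t + |c₀|) (monic hs)
    (natDegree_eq hs) ?_ (tendsto_eval c₀) hε
  filter_upwards [Metric.closedBall_mem_nhds c₀ one_pos] with c hc z hz
  have : |c| ≤ |c₀| + 1 := by
    have := abs_sub_abs_le_abs_sub c c₀
    rw [Metric.mem_closedBall, Real.dist_eq] at hc
    linarith
  exact (norm_le_of_mem_roots hs hz).trans (by linarith)

theorem discRootCount_eventually_eq (hs : 0 < s) (ht : 0 < t) {c₀ : ℝ} (h0 : 0 ≤ c₀)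
    (h1 : c₀ < (s : ℝ) / t) : ∀ᶠ c in 𝓝 c₀, discRootCount (G c) = discRootCount (G c₀) := by
  obtain ⟨δ, hδ, hmargin⟩ := Multiset.exists_pos_forall_le (m := (G c₀).roots)
    (f := fun y => |‖y‖ - 1|) fun y hy => abs_pos.mpr <| sub_ne_zero.mpr fun hy1 =>
      not_isRoot_of_norm_eq_one ht h0 h1 hy1 ((mem_roots (ne_zero hs c₀)).mp hy)
  filter_upwards [eventually_rel_roots hs c₀ hδ] with c hc
  exact Multiset.card_filter_norm_lt_eq_of_rel hc hmargin

theorem discRootCount_of_lt_critical (hs : 0 < s) (ht : 0 < t) {c : ℝ} (h0 : 0 ≤ c)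
    (h1 : c < (s : ℝ) / t) : discRootCount (G c) = t := by
  have hcont : ContinuousOn (fun c => discRootCount (G c)) (Ico 0 ((s : ℝ) / t)) :=
    fun _ hc => ContinuousAt.continuousWithinAt <|
      tendsto_nhds_of_eventually_eq (discRootCount_eventually_eq hs ht hc.1 hc.2)
  rw [isPreconnected_Ico.constant hcont ⟨h0, h1⟩ ⟨le_rfl, by positivity⟩, discRootCount_zero hs ht]

theorem exists_margin_critical (hs : 0 < s) (ht : 0 < t) (hst : s.Coprime t) :
    ∃ δ > 0, ∀ y ∈ (G ((s : ℝ) / t)).roots, y ≠ 1 → δ ≤ |‖y‖ - 1| := by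
  obtain ⟨δ, hδ, hmargin⟩ :=
    Multiset.exists_pos_forall_le (m := (G ((s : ℝ) / t)).roots.filter (· ≠ 1))
      (f := fun y => |‖y‖ - 1|) fun y hy => by
        rw [Multiset.mem_filter, mem_roots (ne_zero hs _)] at hy
        exact abs_pos.mpr <| sub_ne_zero.mpr fun hy1 =>
          hy.2 (eq_one_of_isRoot_of_norm_eq_one hs ht hst hy1 hy.1)
  exact ⟨δ, hδ, fun y hy hy1 => hmargin y (Multiset.mem_filter.mpr ⟨hy, hy1⟩)⟩

theorem discRootCount_critical (hs : 0 < s) (ht : 0 < t) (hst : s.Coprime t) :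
    discRootCount (G ((s : ℝ) / t)) + 1 = t := by
  obtain ⟨δ, hδ, hmargin⟩ := exists_margin_critical hs ht hst
  set ε := min (δ / 2) 1
  have hε : 0 < ε := lt_min (by positivity) one_pos
  obtain ⟨c, hrel, ⟨u, hu, v, hv, hu1, hv1, hun, hvn⟩, hc⟩ :=
    (((eventually_rel_roots hs _ hε).filter_mono nhdsWithin_le_nhds).and
      ((exists_roots_straddling_one hs ht hε (min_le_right _ _)).and
        (Ioo_mem_nhdsLT (show (0 : ℝ) < s / t by positivity)))).exists
  have hcount := Multiset.card_filter_norm_lt_one_of_rel_of_double_one hrel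
    (by rw [count_roots, rootMultiplicity_one_critical hs ht])
    (fun y hy hy1 => by linarith [hmargin y hy hy1, min_le_left (δ / 2) 1]) hu hv hu1 hv1 hun hvn
  have hN := discRootCount_of_lt_critical hs ht hc.1.le hc.2
  rwa [discRootCount, hcount] at hN

theorem scaleRoots_critical (hs : 0 < s) {a : ℂ} (ha : a ≠ 0) :
    (G ((s : ℝ) / t)).scaleRoots a =
      X ^ (s + t) + C (-(((s : ℂ) + t) / t) * a ^ s) * X ^ t + C ((s : ℂ) / t * a ^ (s + t)) := by
  refine Polynomial.funext fun z => ?_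
  have := scaleRoots_eval_mul (G ((s : ℝ) / t)) (z / a) a
  rw [mul_div_cancel₀ z ha, natDegree_eq hs, eval_eq] at this
  have h1 : a ^ (s + t) * (z ^ (s + t) / a ^ (s + t)) = z ^ (s + t) :=
    mul_div_cancel₀ _ (pow_ne_zero _ ha)
  have h2 : a ^ (s + t) * (z ^ t / a ^ t) = a ^ s * z ^ t := by
    rw [pow_add, mul_assoc, mul_div_cancel₀ _ (pow_ne_zero _ ha)]
  rw [this, div_pow, div_pow]
  simp only [eval_add, eval_mul, eval_pow, eval_X, eval_C]
  push_cast
  linear_combination h1 - ((s : ℂ) + t) / t * h2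

end normalizedTrinomial

theorem double_root_properties_general (s t : ℕ) (hs : 0 < s) (ht : 0 < t)
    (hst : Nat.Coprime s t) (p q : ℂ) (hq : q ≠ 0) (a : ℂ)
    (ha : (X ^ (s + t) + C p * X ^ t + C q : Polynomial ℂ).eval a = 0)
    (ha' : (derivative (X ^ (s + t) + C p * X ^ t + C q : Polynomial ℂ)).eval
      a = 0) :
    (‖a‖ ^ (s + t) = ‖q‖ * t / s ∧
      ‖a‖ ^ s = ‖p‖ * t / (s + t)) ∧
    ‖p‖ = ‖q‖ ^ ((s : ℝ) / (s + t)) *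
      (((t : ℝ) / s) ^ ((s : ℝ) / (s + t)) +
        ((s : ℝ) / t) ^ ((t : ℝ) / (s + t))) ∧
    Multiset.card
      (((X ^ (s + t) + C p * X ^ t + C q : Polynomial ℂ)).roots.filter
        (fun z => ‖z‖ < ‖a‖)) = t - 1 := by
  obtain ⟨ha0, rfl, rfl⟩ := trinomial_coeffs_of_double_root ht hq ha ha'
  have hnorm_p : ‖-(((s : ℂ) + t) / t) * a ^ s‖ = ((s : ℝ) + t) / t * ‖a‖ ^ s := by
    rw [norm_mul, norm_neg, normalizedTrinomial.norm_coeff, norm_pow]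
  have hnorm_q : ‖(s : ℂ) / t * a ^ (s + t)‖ = (s : ℝ) / t * ‖a‖ ^ (s + t) := by
    rw [norm_mul, norm_pow, norm_div, Complex.norm_natCast, Complex.norm_natCast]
  refine ⟨⟨by rw [hnorm_q]; field_simp, by rw [hnorm_p]; field_simp⟩, ?_, ?_⟩
  · rw [hnorm_p, hnorm_q]
    exact add_div_mul_pow_eq_rpow_mul hs ht (norm_nonneg a)
  · rw [← normalizedTrinomial.scaleRoots_critical hs ha0,
      roots_scaleRoots _ (isUnit_iff_ne_zero.mpr ha0), Multiset.card_filter_norm_lt_map_mul ha0]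
    have := normalizedTrinomial.discRootCount_critical hs ht hst
    rw [discRootCount] at this
    omega

/-- If `a` is a double root of the trinomial `f = z^(s+t) + p z^t + q`
(`gcd(s,t) = 1`, `p, q ≠ 0`), then (i) `|a|^(s+t) = |q| t/s` and
`|a|^s = |p| t/(s+t)`, (ii) `|p| = |q|^(s/(s+t)) ((t/s)^(s/(s+t)) + (s/t)^(t/(s+t)))`,
and (iii) exactly `t - 1` roots of `f` (with multiplicity) have norm strictly
smaller than `|a|`. -/
theorem double_root_properties (s t : ℕ) (hs : 0 < s) (ht : 0 < t)
    (hst : Nat.Coprime s t) (p q : ℂ) (hp : p ≠ 0) (hq : q ≠ 0) (a : ℂ)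
    (ha : (X ^ (s + t) + C p * X ^ t + C q : Polynomial ℂ).eval a = 0)
    (ha' : (derivative (X ^ (s + t) + C p * X ^ t + C q : Polynomial ℂ)).eval
      a = 0) :
    (‖a‖ ^ (s + t) = ‖q‖ * t / s ∧
      ‖a‖ ^ s = ‖p‖ * t / (s + t)) ∧
    ‖p‖ = ‖q‖ ^ ((s : ℝ) / (s + t)) *
      (((t : ℝ) / s) ^ ((s : ℝ) / (s + t)) +
        ((s : ℝ) / t) ^ ((t : ℝ) / (s + t))) ∧
    Multiset.card
      (((X ^ (s + t) + C p * X ^ t + C q : Polynomial ℂ)).roots.filter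
        (fun z => ‖z‖ < ‖a‖)) = t - 1 :=
  double_root_properties_general s t hs ht hst p q hq a ha ha'
end

section
/- Let s, t be positive integers, p ∈ ℂ with p ≠ 0, q ∈ ℂ, and f(z) = z^{s+t} + p z^t + q. For v > 0, f has a root of norm v if and only if there exists φ ∈ [0, 2π) with q = |p|·v^t·e^{i·(π + arg(p) + t·φ)} − v^{s+t}·e^{i·(s+t)·φ}. (Equivalently: q lies, up to rotation, on the epitrochoid with parameters R = v^t·|p|·s/(s+t), r = v^t·|p|·t/(s+t), d = v^{s+t}.) -/
/-! A complex number of norm `v` is `z = v e^{iφ}` with `φ ∈ [0, 2π)`, and `f(z) = 0` says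
`q = -p z^t - z^(s+t)`. Since `-p = |p| e^{i(π + arg p)}`, this is the epitrochoid formula. -/

open Polynomial Complex

lemma exists_mem_Ico_norm_mul_exp_eq (z : ℂ) :
    ∃ φ ∈ Set.Ico (0 : ℝ) (2 * Real.pi), (‖z‖ : ℂ) * exp (I * φ) = z := by
  refine ⟨toIcoMod Real.two_pi_pos 0 z.arg,
    by simpa using toIcoMod_mem_Ico Real.two_pi_pos 0 z.arg, ?_⟩
  obtain ⟨n, hn⟩ : ∃ n : ℤ, toIcoMod Real.two_pi_pos 0 z.arg = z.arg + n * (2 * Real.pi) :=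
    ⟨-toIcoDiv Real.two_pi_pos 0 z.arg, by
      rw [← sub_eq_iff_eq_add', toIcoMod_sub_self_eq_mul]; push_cast; ring⟩
  calc (‖z‖ : ℂ) * exp (I * ↑(toIcoMod Real.two_pi_pos 0 z.arg))
      = ‖z‖ * exp (z.arg * I) * exp (n * (2 * Real.pi * I)) := by
        rw [hn, mul_assoc, ← exp_add]; push_cast; ring_nf
    _ = z := by rw [exp_int_mul_two_pi_mul_I, mul_one, norm_mul_exp_arg_mul_I]

lemma norm_ofReal_mul_exp_I_mul {v : ℝ} (hv : 0 ≤ v) (φ : ℝ) :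
    ‖(v : ℂ) * exp (I * φ)‖ = v := by
  rw [norm_mul, norm_exp_I_mul_ofReal, mul_one, norm_real, Real.norm_of_nonneg hv]

lemma eval_trinomial_eq_zero_iff (s t : ℕ) (p q z : ℂ) :
    (X ^ (s + t) + C p * X ^ t + C q : ℂ[X]).eval z = 0 ↔ q = -(p * z ^ t) - z ^ (s + t) := by
  simp only [eval_add, eval_mul, eval_pow, eval_C, eval_X]
  constructor <;> intro h <;> linear_combination h

lemma epitrochoid_eq_neg_mul_pow_sub_pow (p : ℂ) (v φ : ℝ) (s t : ℕ) :
    (‖p‖ : ℂ) * (v : ℂ) ^ t * exp (I * ((Real.pi + p.arg + t * φ : ℝ) : ℂ))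
        - (v : ℂ) ^ (s + t) * exp (I * (s + t) * φ)
      = -(p * ((v : ℂ) * exp (I * φ)) ^ t) - ((v : ℂ) * exp (I * φ)) ^ (s + t) := by
  have h_phase : exp (I * ((Real.pi + p.arg + t * φ : ℝ) : ℂ))
      = exp (Real.pi * I) * exp (p.arg * I) * exp (I * φ) ^ t := by
    rw [← exp_nat_mul, ← exp_add, ← exp_add]; push_cast; ring_nf
  have h_power : exp (I * (s + t) * φ) = exp (I * φ) ^ (s + t) := by
    rw [← exp_nat_mul]; push_cast; ring_nf
  rw [h_phase, h_power, exp_pi_mul_I, mul_pow, mul_pow]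
  linear_combination (-(v : ℂ) ^ t * exp (I * φ) ^ t) * norm_mul_exp_arg_mul_I p

theorem root_of_norm_iff_on_epitrochoid_general (s t : ℕ)
    (p q : ℂ) (v : ℝ) (hv : 0 < v) :
    (∃ z : ℂ, (X ^ (s + t) + C p * X ^ t + C q : Polynomial ℂ).eval z = 0 ∧
        ‖z‖ = v) ↔
    ∃ φ ∈ Set.Ico (0 : ℝ) (2 * Real.pi),
      q = (‖p‖ : ℂ) * (v : ℂ) ^ t *
            Complex.exp (Complex.I * ((Real.pi + p.arg + t * φ : ℝ) : ℂ))
        - (v : ℂ) ^ (s + t) * Complex.exp (Complex.I * (s + t) * φ) := by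
  simp only [eval_trinomial_eq_zero_iff, epitrochoid_eq_neg_mul_pow_sub_pow]
  constructor
  · rintro ⟨z, hq, rfl⟩
    obtain ⟨φ, hφ, hz⟩ := exists_mem_Ico_norm_mul_exp_eq z
    exact ⟨φ, hφ, by rwa [hz]⟩
  · rintro ⟨φ, -, hq⟩
    exact ⟨_, hq, norm_ofReal_mul_exp_I_mul hv.le φ⟩

/-- The trinomial `z^(s+t) + p z^t + q` (with `p ≠ 0`) has a root of norm
`v > 0` if and only if `q` lies on the epitrochoid
`φ ↦ |p| v^t e^(i(π + arg p + tφ)) - v^(s+t) e^(i(s+t)φ)`, i.e. (up to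
rotation) the epitrochoid with parameters `R = v^t |p| s/(s+t)`,
`r = v^t |p| t/(s+t)`, `d = v^(s+t)`. -/
theorem root_of_norm_iff_on_epitrochoid (s t : ℕ) (hs : 0 < s) (ht : 0 < t)
    (p q : ℂ) (hp : p ≠ 0) (v : ℝ) (hv : 0 < v) :
    (∃ z : ℂ, (X ^ (s + t) + C p * X ^ t + C q : Polynomial ℂ).eval z = 0 ∧
        ‖z‖ = v) ↔
    ∃ φ ∈ Set.Ico (0 : ℝ) (2 * Real.pi),
      q = (‖p‖ : ℂ) * (v : ℂ) ^ t *
            Complex.exp (Complex.I * ((Real.pi + p.arg + t * φ : ℝ) : ℂ))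
        - (v : ℂ) ^ (s + t) * Complex.exp (Complex.I * (s + t) * φ) :=
  root_of_norm_iff_on_epitrochoid_general s t p q v hv
end
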